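/- arXiv:1110.4811 — 11 statements merged into one kernel-verified Lean document; each statement's English description precedes it below -/
import Mathlib

section
/- Let ρ : ℝ → ℝ be nonnegative and locally integrable with F(s) := ∫₀ˢ ρ(u) du unbounded above, let D(x) := inf{ y ∈ ℝ | F(y) > x } for x ≥ 0 and s* := D(0). Then for every x ≥ 0, the total cost of buying x stocks satisfies ∫_{s*}^{D(x)} u·ρ(u) du = ∫₀ˣ D(y) dy. -/
/-!
Both sides are compared with `∫_{s*}^{D(x)} F`. Since `F` is absolutely continuous with `F' = ρ`
a.e., integration by parts turns the cost into `D(x) x - ∫_{s*}^{D(x)} F`. On the other side, `D`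
is a generalized inverse of the continuous nondecreasing `F`: off the graph of `F`, `t < D(y)` iff
`F(t) < y`. Computing the area under the graph of `D` by slicing in the other direction gives
`∫_0^x D + ∫_{s*}^{D(x)} F = D(x) x`, the equality case of Young's inequality.
-/

open MeasureTheory Set Filter Topology

theorem MeasureTheory.LocallyIntegrable.intervalIntegrable {E : Type*} [NormedAddCommGroup E]
    {f : ℝ → E} {μ : Measure ℝ} (hf : LocallyIntegrable f μ) (a b : ℝ) :
    IntervalIntegrable f μ a b :=
  intervalIntegrable_iff.2 <| (hf.integrableOn_isCompact isCompact_uIcc).mono_set uIoc_subset_uIcc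

section RightQuasiInverse

variable {F : ℝ → ℝ} {y t : ℝ}

theorem Monotone.bddBelow_setOf_lt (hF : Monotone F) (ht : F t ≤ y) :
    BddBelow {s | y < F s} :=
  ⟨t, fun _ hs => le_of_not_gt fun hst => ((hF hst.le).trans ht).not_gt hs⟩

theorem apply_le_of_lt_csInf_setOf_lt (hbdd : BddBelow {s | y < F s})
    (ht : t < sInf {s | y < F s}) : F t ≤ y :=
  le_of_not_gt fun h => (csInf_le hbdd h).not_gt ht

theorem apply_csInf_setOf_lt (hF : Continuous F) (hne : {s | y < F s}.Nonempty)
    (hbdd : BddBelow {s | y < F s}) : F (sInf {s | y < F s}) = y := by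
  apply le_antisymm
  · have hlim : Tendsto F (𝓝[<] sInf {s | y < F s}) (𝓝 (F (sInf {s | y < F s}))) :=
      hF.continuousAt.tendsto.mono_left nhdsWithin_le_nhds
    exact le_of_tendsto hlim
      (eventually_nhdsWithin_of_forall fun t ht => apply_le_of_lt_csInf_setOf_lt hbdd ht)
  · exact closure_minimal (fun s hs => le_of_lt hs) (isClosed_le continuous_const hF)
      (csInf_mem_closure hne hbdd)

theorem lt_csInf_setOf_lt_iff (hc : Continuous F) (hF : Monotone F)
    (hne : {s | y < F s}.Nonempty) (hbdd : BddBelow {s | y < F s}) (hty : F t ≠ y) :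
    t < sInf {s | y < F s} ↔ F t < y := by
  refine ⟨fun ht => (apply_le_of_lt_csInf_setOf_lt hbdd ht).lt_of_ne hty, fun ht => ?_⟩
  refine (le_csInf hne fun s hs => le_of_not_gt fun hst => ?_).lt_of_ne ?_
  · exact lt_asymm hs ((hF hst.le).trans_lt ht)
  · rintro rfl
    exact hty (apply_csInf_setOf_lt hc hne hbdd)

end RightQuasiInverse

theorem integral_mul_eq_mul_sub_integral_primitive {ρ : ℝ → ℝ} {a b : ℝ}
    (hρ : IntervalIntegrable ρ volume a b) :
    ∫ u in a..b, u * ρ u = b * (∫ u in a..b, ρ u) - ∫ t in a..b, ∫ u in a..t, ρ u := by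
  have hG := hρ.absolutelyContinuousOnInterval_intervalIntegral left_mem_uIcc
  have hid : AbsolutelyContinuousOnInterval id a b :=
    contDiffOn_id.absolutelyContinuousOnInterval
  have hderiv :
      ∫ u in a..b, u * ρ u = ∫ u in a..b, id u * deriv (fun t => ∫ u in a..t, ρ u) u := by
    refine intervalIntegral.integral_congr_ae ?_
    filter_upwards [hρ.ae_hasDerivAt_integral] with u hu hu'
    rw [(hu (uIoc_subset_uIcc hu') a left_mem_uIcc).deriv, id]
  rw [hderiv, hid.integral_mul_deriv_eq_deriv_mul hG]
  simp

-- Both sides are the measure of `{(y, t) ∈ (c, d] × (a, b] | t < g y}`, sliced in two ways.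
theorem integral_Ioc_sub_eq_of_lt_iff {g G : ℝ → ℝ} {a b c d : ℝ}
    (hg : AEMeasurable g (volume.restrict (Ioc c d)))
    (hg_mem : ∀ y ∈ Ioc c d, g y ∈ Icc a b) (hG_mem : ∀ t ∈ Ioc a b, G t ∈ Icc c d)
    (hgG : ∀ y ∈ Ioc c d, ∀ t ∈ Ioc a b, G t ≠ y → (t < g y ↔ G t < y)) :
    ∫ y in Ioc c d, (g y - a) = ∫ t in Ioc a b, (d - G t) := by
  have hint :
      Integrable (Function.uncurry fun y t : ℝ => (Iio (g y)).indicator (1 : ℝ → ℝ) t)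
      ((volume.restrict (Ioc c d)).prod (volume.restrict (Ioc a b))) := by
    have : Function.uncurry (fun y t : ℝ => (Iio (g y)).indicator (1 : ℝ → ℝ) t) =
        {p : ℝ × ℝ | p.2 < g p.1}.indicator 1 := by
      ext ⟨_, _⟩; simp [indicator_apply]
    rw [this]
    exact (integrable_const 1).indicator₀
      (nullMeasurableSet_lt measurable_snd.aemeasurable hg.comp_fst)
  calc ∫ y in Ioc c d, (g y - a)
      = ∫ y in Ioc c d, ∫ t in Ioc a b, (Iio (g y)).indicator (1 : ℝ → ℝ) t := by
        refine setIntegral_congr_fun measurableSet_Ioc fun y hy => ?_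
        have : Ioc a b ∩ Iio (g y) = Ioo a (g y) := by
          ext t; simp only [mem_inter_iff, mem_Ioc, mem_Iio, mem_Ioo]; grind [(hg_mem y hy).2]
        rw [setIntegral_indicator measurableSet_Iio, this, Pi.one_def, setIntegral_const,
          Real.volume_real_Ioo_of_le (hg_mem y hy).1, smul_eq_mul, mul_one]
    _ = ∫ t in Ioc a b, ∫ y in Ioc c d, (Iio (g y)).indicator (1 : ℝ → ℝ) t :=
        integral_integral_swap hint
    _ = ∫ t in Ioc a b, (d - G t) := by
        refine setIntegral_congr_fun measurableSet_Ioc fun t ht => ?_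
        have hae : ∀ᵐ y ∂volume.restrict (Ioc c d),
            (Iio (g y)).indicator (1 : ℝ → ℝ) t = (Ioi (G t)).indicator 1 y := by
          filter_upwards [ae_restrict_mem measurableSet_Ioc,
            (countable_singleton (G t)).ae_notMem _] with y hy hyG
          simp [indicator_apply, hgG y hy t ht (Ne.symm hyG)]
        have : Ioc c d ∩ Ioi (G t) = Ioc (G t) d := by
          ext y; simp only [mem_inter_iff, mem_Ioc, mem_Ioi]; grind [(hG_mem t ht).1]
        rw [integral_congr_ae hae, setIntegral_indicator measurableSet_Ioi, this, Pi.one_def,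
          setIntegral_const, Real.volume_real_Ioc_of_le (hG_mem t ht).2, smul_eq_mul, mul_one]

theorem integral_add_integral_eq_of_lt_iff {g G : ℝ → ℝ} {a b c d : ℝ}
    (hab : a ≤ b) (hcd : c ≤ d)
    (hg : IntervalIntegrable g volume c d) (hG : IntervalIntegrable G volume a b)
    (hg_mem : ∀ y ∈ Ioc c d, g y ∈ Icc a b) (hG_mem : ∀ t ∈ Ioc a b, G t ∈ Icc c d)
    (hgG : ∀ y ∈ Ioc c d, ∀ t ∈ Ioc a b, G t ≠ y → (t < g y ↔ G t < y)) :
    (∫ y in c..d, g y) + ∫ t in a..b, G t = b * d - a * c := by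
  have key :=
    integral_Ioc_sub_eq_of_lt_iff hg.1.aestronglyMeasurable.aemeasurable hg_mem hG_mem hgG
  rw [← intervalIntegral.integral_of_le hcd, ← intervalIntegral.integral_of_le hab,
    intervalIntegral.integral_sub hg intervalIntegrable_const,
    intervalIntegral.integral_sub intervalIntegrable_const hG] at key
  simp only [intervalIntegral.integral_const, smul_eq_mul] at key
  linarith

/-- The total cost of buying `x` stocks by market order equals both the integral of
price times density over the cleared part of the book, and the integral of the
post-trade ask price. -/
theorem stmt_0 (ρ : ℝ → ℝ) (hρ_nonneg : ∀ u, 0 ≤ ρ u)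
    (hρ_loc : LocallyIntegrable ρ volume)
    (F D : ℝ → ℝ)
    (hF : ∀ s, F s = ∫ u in (0:ℝ)..s, ρ u)
    (hF_unbdd : ∀ M : ℝ, ∃ s, F s > M)
    (hD : ∀ x, 0 ≤ x → D x = sInf {y : ℝ | F y > x})
    (sstar : ℝ) (hs : sstar = D 0) :
    ∀ x, 0 ≤ x → (∫ u in sstar..D x, u * ρ u) = ∫ y in (0:ℝ)..x, D y := by
  intro x hx
  have hρ_int := hρ_loc.intervalIntegrable
  have hF_sub (a b : ℝ) : ∫ u in a..b, ρ u = F b - F a := by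
    rw [hF, hF, intervalIntegral.integral_interval_sub_left (hρ_int 0 b) (hρ_int 0 a)]
  have hF_cont : Continuous F := by
    simpa only [← funext hF] using intervalIntegral.continuous_primitive hρ_int 0
  have hF_mono : Monotone F := fun a b hab => sub_nonneg.1 <|
    hF_sub a b ▸ intervalIntegral.integral_nonneg hab fun u _ => hρ_nonneg u
  have hbdd (y : ℝ) (hy : 0 ≤ y) : BddBelow {s | y < F s} :=
    hF_mono.bddBelow_setOf_lt (t := 0) (by simpa [hF] using hy)
  have hD' (y : ℝ) (hy : 0 ≤ y) : D y = sInf {s | y < F s} := hD y hy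
  have hFD (y : ℝ) (hy : 0 ≤ y) : F (D y) = y := by
    rw [hD' y hy]; exact apply_csInf_setOf_lt hF_cont (hF_unbdd y) (hbdd y hy)
  have hD_mono : MonotoneOn D (Ici 0) := fun y hy y' hy' hyy' => by
    rw [hD' y hy, hD' y' hy']
    exact csInf_le_csInf (hbdd y hy) (hF_unbdd y') fun s hs => hyy'.trans_lt hs
  have hF0 : F sstar = 0 := hs ▸ hFD 0 le_rfl
  have hFx : F (D x) = x := hFD x hx
  have hsx : sstar ≤ D x := hs ▸ hD_mono self_mem_Ici hx hx
  have young := integral_add_integral_eq_of_lt_iff hsx hx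
    ((hD_mono.mono (by simp [uIcc_of_le hx, Icc_subset_Ici_self])).intervalIntegrable)
    (hF_cont.intervalIntegrable _ _)
    (fun y hy => ⟨hs ▸ hD_mono self_mem_Ici hy.1.le hy.1.le, hD_mono hy.1.le hx hy.2⟩)
    (fun t ht => ⟨hF0 ▸ hF_mono ht.1.le, hFx ▸ hF_mono ht.2⟩)
    (fun y hy t _ hty => by
      rw [hD' y hy.1.le]
      exact lt_csInf_setOf_lt_iff hF_cont hF_mono (hF_unbdd y) (hbdd y hy.1.le) hty)
  calc ∫ u in sstar..D x, u * ρ u = D x * x - ∫ t in sstar..D x, F t := by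
        rw [integral_mul_eq_mul_sub_integral_primitive (hρ_int _ _)]
        simp only [hF_sub, hFx, hF0, sub_zero]
    _ = ∫ y in (0:ℝ)..x, D y := by linarith
end

section
/- For a limit order book with constant density (with s* ≥ s_*, ρ⁺ > 0, ρ⁻ > 0), for every y ≥ 0 the fast trader's latency-arbitrage profit π(x,y) = −H⁺(x) + min(x,y)·D⁺(x) + H⁻(max(x−y,0)) is maximised over x ≥ 0 at x = y, i.e. π(x,y) ≤ π(y,y) for all x ≥ 0, and the maximal profit equals π(y,y) = y²/(2ρ⁺). -/
/-!
Buying `x ≤ y` earns `x²/(2ρ⁺)`, which grows with `x`. Buying `x ≥ y` earns `y²/(2ρ⁺)` less the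
loss on the excess `x - y`: it is bought at ask prices at least `s*` and dumped at bid prices at
most `s_*`, costing `(s* - s_*)(x - y) + (x - y)²/(2ρ⁺) + (x - y)²/(2ρ⁻) ≥ 0`.
-/

noncomputable def latencyProfit (sa sb ρp ρm x y : ℝ) : ℝ :=
  -(sa * x + x ^ 2 / (2 * ρp)) + min x y * (sa + x / ρp)
    + (sb * max (x - y) 0 - max (x - y) 0 ^ 2 / (2 * ρm))

section

variable {sa sb ρp ρm x y : ℝ}

theorem latencyProfit_of_le (hρp : ρp ≠ 0) (h : x ≤ y) :
    latencyProfit sa sb ρp ρm x y = x ^ 2 / (2 * ρp) := by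
  rw [latencyProfit, min_eq_left h, max_eq_right (sub_nonpos.2 h)]
  field_simp
  ring

theorem latencyProfit_self (hρp : ρp ≠ 0) :
    latencyProfit sa sb ρp ρm y y = y ^ 2 / (2 * ρp) :=
  latencyProfit_of_le hρp le_rfl

theorem latencyProfit_of_ge (hρp : ρp ≠ 0) (hρm : ρm ≠ 0) (h : y ≤ x) :
    latencyProfit sa sb ρp ρm x y = y ^ 2 / (2 * ρp)
      - ((sa - sb) * (x - y) + (x - y) ^ 2 / (2 * ρp) + (x - y) ^ 2 / (2 * ρm)) := by
  rw [latencyProfit, min_eq_right h, max_eq_left (sub_nonneg.2 h)]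
  field_simp
  ring

theorem latencyProfit_le_self (hs : sb ≤ sa) (hρp : 0 < ρp) (hρm : 0 < ρm) (hx : 0 ≤ x) :
    latencyProfit sa sb ρp ρm x y ≤ latencyProfit sa sb ρp ρm y y := by
  rw [latencyProfit_self hρp.ne']
  rcases le_total x y with hxy | hyx
  · rw [latencyProfit_of_le hρp.ne' hxy]
    gcongr
  · rw [latencyProfit_of_ge hρp.ne' hρm.ne' hyx]
    have hloss : 0 ≤ (sa - sb) * (x - y) + (x - y) ^ 2 / (2 * ρp) + (x - y) ^ 2 / (2 * ρm) := by
      have := mul_nonneg (sub_nonneg.2 hs) (sub_nonneg.2 hyx)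
      positivity
    linarith

end

/-- In a constant-density limit order book, for every slow trade `y ≥ 0` the fast
trader's latency-arbitrage profit `π(x,y)` is maximised over `x ≥ 0` at `x = y`, and
the maximal profit equals `y²/(2ρ⁺)`. -/
theorem stmt_5 (sa sb ρp ρm : ℝ) (hs : sb ≤ sa) (hρp : 0 < ρp) (hρm : 0 < ρm)
    (Hp Dp Hm : ℝ → ℝ) (π : ℝ → ℝ → ℝ)
    (hHp : ∀ x, Hp x = sa * x + x ^ 2 / (2 * ρp))
    (hDp : ∀ x, Dp x = sa + x / ρp)
    (hHm : ∀ x, Hm x = sb * x - x ^ 2 / (2 * ρm))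
    (hπ : ∀ x y, π x y = -Hp x + min x y * Dp x + Hm (max (x - y) 0)) :
    ∀ y, 0 ≤ y → (∀ x, 0 ≤ x → π x y ≤ π y y) ∧ π y y = y ^ 2 / (2 * ρp) := by
  have hπ_eq : π = latencyProfit sa sb ρp ρm := by
    funext x y
    rw [hπ, hHp, hDp, hHm, latencyProfit]
  subst hπ_eq
  exact fun y _ => ⟨fun x hx => latencyProfit_le_self hs hρp hρm hx, latencyProfit_self hρp.ne'⟩
end

section
/- For a limit order book with constant density, if the fast trader wishes to acquire a net position of x ≥ 0 stocks and the slow trader buys y ≥ 0 stocks, and the fast trader buys x+y stocks by market order then sells y of them to the slow trader at price D⁺(x+y), then: (i) the fast trader's net cost is H⁺(x+y) − y·D⁺(x+y) = s*·x + (x² − y²)/(2ρ⁺), so for x ≤ y she pays at most s* per stock; and (ii) the slow trader's total cost is y·D⁺(x+y) = H⁺(y) + x·y/ρ⁺ + y²/(2ρ⁺), i.e. he pays both the slippage cost x·y/ρ⁺ and the latency-arbitrage cost y²/(2ρ⁺). -/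
namespace ConstantDensityBook

/-- The paper's `H⁺`, for ask price `s` and density `ρ`. -/
noncomputable def buyCost (s ρ x : ℝ) : ℝ := s * x + x ^ 2 / (2 * ρ)

/-- The paper's `D⁺`. -/
noncomputable def askAfterBuy (s ρ x : ℝ) : ℝ := s + x / ρ

variable (s ρ x y : ℝ)

theorem buyCost_add_sub_mul_askAfterBuy :
    buyCost s ρ (x + y) - y * askAfterBuy s ρ (x + y) = s * x + (x ^ 2 - y ^ 2) / (2 * ρ) := by
  unfold buyCost askAfterBuy
  ring

variable {s ρ x y}

theorem buyCost_add_sub_mul_askAfterBuy_le (hρ : 0 ≤ ρ) (hx : 0 ≤ x) (hxy : x ≤ y) :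
    buyCost s ρ (x + y) - y * askAfterBuy s ρ (x + y) ≤ s * x := by
  have hsq : x ^ 2 - y ^ 2 ≤ 0 := sub_nonpos.mpr (pow_le_pow_left₀ hx hxy 2)
  rw [buyCost_add_sub_mul_askAfterBuy]
  linarith [div_nonpos_of_nonpos_of_nonneg hsq (by positivity : (0 : ℝ) ≤ 2 * ρ)]

variable (s ρ x y)

theorem mul_askAfterBuy_add :
    y * askAfterBuy s ρ (x + y) = buyCost s ρ y + x * y / ρ + y ^ 2 / (2 * ρ) := by
  unfold buyCost askAfterBuy
  ring

end ConstantDensityBook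

open ConstantDensityBook in
/-- Cost shifting: if the fast trader buys `x+y` stocks and sells `y` of them to the
slow trader at price `D⁺(x+y)`, her net cost is `s*·x + (x²−y²)/(2ρ⁺)` (at most
`s*·x` when `x ≤ y`), while the slow trader pays the slippage cost `x·y/ρ⁺` and the
latency-arbitrage cost `y²/(2ρ⁺)` on top of `H⁺(y)`. -/
theorem stmt_6 (sa ρp : ℝ) (hρp : 0 < ρp)
    (Hp Dp : ℝ → ℝ)
    (hHp : ∀ x, Hp x = sa * x + x ^ 2 / (2 * ρp))
    (hDp : ∀ x, Dp x = sa + x / ρp) :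
    ∀ x, 0 ≤ x → ∀ y, 0 ≤ y →
      (Hp (x + y) - y * Dp (x + y) = sa * x + (x ^ 2 - y ^ 2) / (2 * ρp)) ∧
      (x ≤ y → Hp (x + y) - y * Dp (x + y) ≤ sa * x) ∧
      (y * Dp (x + y) = Hp y + x * y / ρp + y ^ 2 / (2 * ρp)) := by
  obtain rfl : Hp = buyCost sa ρp := funext hHp
  obtain rfl : Dp = askAfterBuy sa ρp := funext hDp
  intro x hx y _
  exact ⟨buyCost_add_sub_mul_askAfterBuy sa ρp x y,
    buyCost_add_sub_mul_askAfterBuy_le hρp.le hx,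
    mul_askAfterBuy_add sa ρp x y⟩
end

section
/- Let η > 0, α > 0, y > 0, x = α·y, and suppose the (constant) limit order book density satisfies ρ = (1+α)/(2η). Define the ask-price jump ΔS_ask = (1+α)·y/ρ, the book-value jump ΔS_book = ΔS_ask/2, and the fast trader's excess profit π̃ = α·y·(ΔS_ask/2) + (ρ/2)·((1−α)/(1+α))·(ΔS_ask)². Then ΔS_book = (η/α)·x and π̃ = η⁻¹·(ΔS_book)². -/
/-! With `ρ = (1+α)/(2η)` the ask jump collapses to `ΔS_ask = 2ηy`, so `ΔS_book = ηy = (η/α)·x`.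
In the profit, the transaction-cost term `(ρ/2)·((1-α)/(1+α))·ΔS_ask²` becomes `(1-α)ηy²`; added
to the integration gain `αηy²` it gives `ηy² = η⁻¹(ηy)²`. -/

section ConstantDensity

variable {K : Type*} [Field K] [CharZero K] {η α : K}

theorem askJump_eq_of_density (hα : 1 + α ≠ 0) (y : K) :
    (1 + α) * y / ((1 + α) / (2 * η)) = 2 * η * y := by
  rcases eq_or_ne η 0 with rfl | hη
  · simp
  · field_simp

theorem excessProfit_eq_of_density (hα : 1 + α ≠ 0) (y : K) :
    α * y * (2 * η * y / 2) + ((1 + α) / (2 * η) / 2) * ((1 - α) / (1 + α)) * (2 * η * y) ^ 2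
      = η * y ^ 2 := by
  rcases eq_or_ne η 0 with rfl | hη
  · simp
  · field_simp
    ring

end ConstantDensity

theorem stmt_7_general (η α y x ρ ΔSask ΔSbook πt : ℝ)
    (hη : 0 < η) (hα : 0 < α)
    (hx : x = α * y)
    (hρ : ρ = (1 + α) / (2 * η))
    (hask : ΔSask = (1 + α) * y / ρ)
    (hbook : ΔSbook = ΔSask / 2)
    (hπ : πt = α * y * (ΔSask / 2) + (ρ / 2) * ((1 - α) / (1 + α)) * ΔSask ^ 2) :
    ΔSbook = (η / α) * x ∧ πt = η⁻¹ * ΔSbook ^ 2 := by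
  have hα₁ : 1 + α ≠ 0 := by positivity
  have hask' : ΔSask = 2 * η * y := by rw [hask, hρ, askJump_eq_of_density hα₁]
  have hbook' : ΔSbook = η * y := by rw [hbook, hask']; ring
  constructor
  · rw [hbook', hx]
    field_simp
  · rw [hπ, hask', hρ, excessProfit_eq_of_density hα₁, hbook']
    field_simp

/-- Optional-integration interpretation: with `x = α·y` and book density
`ρ = (1+α)/(2η)`, the book-value jump is `ΔS_book = (η/α)·x` and the fast trader's
excess profit is `π̃ = η⁻¹·(ΔS_book)²`. -/
theorem stmt_7 (η α y x ρ ΔSask ΔSbook πt : ℝ)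
    (hη : 0 < η) (hα : 0 < α) (hy : 0 < y)
    (hx : x = α * y)
    (hρ : ρ = (1 + α) / (2 * η))
    (hask : ΔSask = (1 + α) * y / ρ)
    (hbook : ΔSbook = ΔSask / 2)
    (hπ : πt = α * y * (ΔSask / 2) + (ρ / 2) * ((1 - α) / (1 + α)) * ΔSask ^ 2) :
    ΔSbook = (η / α) * x ∧ πt = η⁻¹ * ΔSbook ^ 2 :=
  stmt_7_general η α y x ρ ΔSask ΔSbook πt hη hα hx hρ hask hbook hπ
end

section
/- Consider a limit order book with constant density (ask price s* > 0, density ρ⁺ > 0) and a Tobin tax with rates r_m, r_l < 1 on market and limit orders respectively, overall rate R := (1+r_m)/(1−r_l) − 1 satisfying 0 ≤ R < 1. The fast trader's after-tax profit from front-running with x stocks is π(x) = (1−r_l)·x·D⁺(x) − (1+r_m)·H⁺(x). Set y_min := 2·(R/(1−R))·s*·ρ⁺. Then: (i) if the slow trader buys y with 0 ≤ y ≤ y_min, then π(x) ≤ 0 = π(0) for all x ∈ [0,y], so the fast trader's profit is maximised by not trading; (ii) if y > y_min, then π(x) ≤ π(y) for all x ∈ [0,y] and π(y) > 0, so her profit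 is maximised by trading x = y. -/
/-!
The tax only rescales the cost of the market order by `1 + R` relative to the proceeds, so the
profit is a convex quadratic vanishing at `0` and at `y_min`:
`π x = (1 - r_l)(1 - R)/(2ρ⁺) · x (x - y_min)`.
It is therefore nonpositive on `[0, y_min]`, and on `[0, y]` with `y > y_min` it is maximal at the
right endpoint, where it is positive.
-/

theorem tobin_profit_eq_mul_mul_sub (sa ρp rm rl R x : ℝ) (hρp : ρp ≠ 0) (hrl : 1 - rl ≠ 0)
    (hR : R = (1 + rm) / (1 - rl) - 1) (hR1 : 1 - R ≠ 0) :
    (1 - rl) * x * (sa + x / ρp) - (1 + rm) * (sa * x + x ^ 2 / (2 * ρp)) =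
      (1 - rl) * (1 - R) / (2 * ρp) * (x * (x - 2 * (R / (1 - R)) * sa * ρp)) := by
  have hrm : 1 + rm = (1 - rl) * (1 + R) := by
    rw [hR]
    field_simp
    ring
  rw [hrm]
  field_simp
  ring

section Quadratic

variable {c m x y : ℝ}

theorem mul_mul_sub_nonpos (hc : 0 ≤ c) (hx : 0 ≤ x) (hxm : x ≤ m) : c * (x * (x - m)) ≤ 0 :=
  mul_nonpos_of_nonneg_of_nonpos hc (mul_nonpos_of_nonneg_of_nonpos hx (sub_nonpos.2 hxm))

theorem mul_mul_sub_le_of_le (hc : 0 ≤ c) (hx : 0 ≤ x) (hxy : x ≤ y) (hmy : m < y) :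
    c * (x * (x - m)) ≤ c * (y * (y - m)) := by
  have hdiff : y * (y - m) - x * (x - m) = (y - x) * (x + y - m) := by ring
  have hnonneg : 0 ≤ (y - x) * (x + y - m) := mul_nonneg (by linarith) (by linarith)
  exact mul_le_mul_of_nonneg_left (by linarith) hc

theorem mul_mul_sub_pos (hc : 0 < c) (hm : 0 ≤ m) (hmy : m < y) : 0 < c * (y * (y - m)) :=
  mul_pos hc (mul_pos (hm.trans_lt hmy) (sub_pos.2 hmy))

end Quadratic

theorem stmt_8_general (sa ρp rm rl R ymin : ℝ) (hsa : 0 < sa) (hρp : 0 < ρp)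
    (hrl : rl < 1)
    (hR : R = (1 + rm) / (1 - rl) - 1) (hR0 : 0 ≤ R) (hR1 : R < 1)
    (Hp Dp π : ℝ → ℝ)
    (hHp : ∀ x, Hp x = sa * x + x ^ 2 / (2 * ρp))
    (hDp : ∀ x, Dp x = sa + x / ρp)
    (hπ : ∀ x, π x = (1 - rl) * x * Dp x - (1 + rm) * Hp x)
    (hymin : ymin = 2 * (R / (1 - R)) * sa * ρp) :
    (∀ y, 0 ≤ y → y ≤ ymin → ∀ x ∈ Set.Icc 0 y, π x ≤ 0) ∧ π 0 = 0 ∧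
      (∀ y, ymin < y → (∀ x ∈ Set.Icc 0 y, π x ≤ π y) ∧ 0 < π y) := by
  have hrl' : 0 < 1 - rl := sub_pos.2 hrl
  have hR1' : 0 < 1 - R := sub_pos.2 hR1
  set c := (1 - rl) * (1 - R) / (2 * ρp)
  have hc : 0 < c := by positivity
  have hymin0 : 0 ≤ ymin := by rw [hymin]; positivity
  have hπ_eq : ∀ x, π x = c * (x * (x - ymin)) := fun x => by
    rw [hπ, hHp, hDp, hymin]
    exact tobin_profit_eq_mul_mul_sub sa ρp rm rl R x hρp.ne' hrl'.ne' hR hR1'.ne'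
  simp only [hπ_eq]
  refine ⟨fun y _ hy x hx => mul_mul_sub_nonpos hc.le hx.1 (hx.2.trans hy), by ring,
    fun y hy => ⟨fun x hx => mul_mul_sub_le_of_le hc.le hx.1 hx.2 hy,
      mul_mul_sub_pos hc hymin0 hy⟩⟩

/-- Tobin tax: if the slow trader's trade `y` is at most `y_min = 2·(R/(1−R))·s*·ρ⁺`,
the fast trader's after-tax profit is maximised by not trading; otherwise it is
maximised by trading `x = y`, as if the tax were absent. -/
theorem stmt_8 (sa ρp rm rl R ymin : ℝ) (hsa : 0 < sa) (hρp : 0 < ρp)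
    (hrm : rm < 1) (hrl : rl < 1)
    (hR : R = (1 + rm) / (1 - rl) - 1) (hR0 : 0 ≤ R) (hR1 : R < 1)
    (Hp Dp π : ℝ → ℝ)
    (hHp : ∀ x, Hp x = sa * x + x ^ 2 / (2 * ρp))
    (hDp : ∀ x, Dp x = sa + x / ρp)
    (hπ : ∀ x, π x = (1 - rl) * x * Dp x - (1 + rm) * Hp x)
    (hymin : ymin = 2 * (R / (1 - R)) * sa * ρp) :
    (∀ y, 0 ≤ y → y ≤ ymin → ∀ x ∈ Set.Icc 0 y, π x ≤ 0) ∧ π 0 = 0 ∧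
      (∀ y, ymin < y → (∀ x ∈ Set.Icc 0 y, π x ≤ π y) ∧ 0 < π y) :=
  stmt_8_general sa ρp rm rl R ymin hsa hρp hrl hR hR0 hR1 Hp Dp π hHp hDp hπ hymin
end

section
/- Let s* ≥ s_* be reals, ρ⁺, ρ⁻ > 0, and let P be an atomless probability measure on ℝ with P((−∞,0)) = 0. Define π(x,y) = min(x,y)²/(2ρ⁺) − (s*−s_*)·max(x−y,0) − (1/2)·(1/ρ⁺ + 1/ρ⁻)·max(x−y,0)², and G(x) = ∫ π(x,y) dP(y). Then for every x > 0, G is differentiable at x with G′(x) = (x/ρ⁺)·(1 − p(x)) − ((s*−s_*) + (1/ρ⁺ + 1/ρ⁻)·x)·p(x) + (1/ρ⁺ + 1/ρ⁻)·q(x), where p(x) = P({y : y < x}) and q(x) = ∫_{{y < x}} y dP(y). Consequently, if x* > 0 maximises G with p(x*) > 0 and 2/ρ⁺ + 1/ρ⁻ − 1/(ρ⁺·p(x*)) ≠ 0, then x* = ((1/ρ⁺ + 1/ρ⁻)·q(x*)/p(x*) − (s*−s_*)) / (2/ρ⁺ + 1/ρ⁻ − 1/(ρ⁺·p(x*))).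 -/
/-!
Off the diagonal `y = x` the profit `π(·, y)` is smooth, with derivative `x/ρ⁺` for `y > x` and
`-(s* - s_*) - (1/ρ⁺ + 1/ρ⁻)(x - y)` for `y < x`, and on `[0, R]` it is Lipschitz uniformly in
`y ≥ 0`. As `P` has no atoms the diagonal is `P`-null, so differentiating under the integral sign
gives `G'(x) = ∫ ∂ₓπ(x, y) dP(y)`, which splits over `{y < x}` and its complement into the stated
formula. At a positive maximiser `G'(x*) = 0`, a linear equation in `x*` whose solution is the
fixed-point equation.
-/

open MeasureTheory Set

theorem abs_sq_sub_sq_le {u v R : ℝ} (hu : |u| ≤ R) (hv : |v| ≤ R) :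
    |u ^ 2 - v ^ 2| ≤ 2 * R * |u - v| := by
  rw [sq_sub_sq, abs_mul]
  gcongr
  linarith [abs_add_le u v]

namespace OrderBook

/-- The paper's `π` with `ρ = ρ⁺`, `a = s* - s_*` and `κ = 1/ρ⁺ + 1/ρ⁻`. -/
noncomputable def profit (ρ a κ x y : ℝ) : ℝ :=
  min x y ^ 2 / (2 * ρ) - a * max (x - y) 0 - 1 / 2 * κ * max (x - y) 0 ^ 2

noncomputable def profitDeriv (ρ a κ x y : ℝ) : ℝ :=
  if y < x then -a - κ * (x - y) else x / ρ

variable {ρ a κ : ℝ}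

theorem profit_zero_left {y : ℝ} (hy : 0 ≤ y) : profit ρ a κ 0 y = 0 := by
  simp [profit, hy]

theorem continuous_profit (x : ℝ) : Continuous (profit ρ a κ x) := by
  unfold profit; fun_prop

theorem abs_profit_sub_le {x x' y R : ℝ} (hy : 0 ≤ y) (hx : x ∈ Icc 0 R) (hx' : x' ∈ Icc 0 R) :
    |profit ρ a κ x y - profit ρ a κ x' y| ≤ (R / |ρ| + |a| + |κ| * R) * |x - x'| := by
  obtain ⟨hx0, hxR⟩ := hx
  obtain ⟨hx'0, hx'R⟩ := hx'
  have hmin : |min x y - min x' y| ≤ |x - x'| := by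
    simpa using abs_min_sub_min_le_max x y x' y
  have hmax : |max (x - y) 0 - max (x' - y) 0| ≤ |x - x'| := by
    simpa using abs_max_sub_max_le_abs (x - y) (x' - y) 0
  have hR : 0 ≤ R := hx0.trans hxR
  have hn : ∀ {t}, 0 ≤ t → t ≤ R → |min t y| ≤ R := fun ht0 htR => by
    rw [abs_of_nonneg (le_min ht0 hy)]; exact (min_le_left _ _).trans htR
  have hm : ∀ {t}, t ≤ R → |max (t - y) 0| ≤ R := fun htR => by
    rw [abs_of_nonneg (le_max_right _ _)]; exact max_le (by linarith) hR
  have hsq_min : |min x y ^ 2 - min x' y ^ 2| ≤ 2 * R * |x - x'| :=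
    (abs_sq_sub_sq_le (hn hx0 hxR) (hn hx'0 hx'R)).trans (by gcongr)
  have hsq_max : |max (x - y) 0 ^ 2 - max (x' - y) 0 ^ 2| ≤ 2 * R * |x - x'| :=
    (abs_sq_sub_sq_le (hm hxR) (hm hx'R)).trans (by gcongr)
  calc |profit ρ a κ x y - profit ρ a κ x' y|
      = |(min x y ^ 2 - min x' y ^ 2) / (2 * ρ) - a * (max (x - y) 0 - max (x' - y) 0)
          - κ / 2 * (max (x - y) 0 ^ 2 - max (x' - y) 0 ^ 2)| := by
        unfold profit; ring_nf
    _ ≤ |min x y ^ 2 - min x' y ^ 2| / (2 * |ρ|) + |a| * |max (x - y) 0 - max (x' - y) 0|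
          + |κ| / 2 * |max (x - y) 0 ^ 2 - max (x' - y) 0 ^ 2| := by
        refine (abs_sub _ _).trans (add_le_add ((abs_sub _ _).trans (le_of_eq ?_)) (le_of_eq ?_))
        · simp [abs_div, abs_mul]
        · simp [abs_mul, abs_div]
    _ ≤ 2 * R * |x - x'| / (2 * |ρ|) + |a| * |x - x'| + |κ| / 2 * (2 * R * |x - x'|) := by
        gcongr
    _ = (R / |ρ| + |a| + |κ| * R) * |x - x'| := by
        ring

theorem hasDerivAt_profit {x y : ℝ} (hxy : y ≠ x) :
    HasDerivAt (profit ρ a κ · y) (profitDeriv ρ a κ x y) x := by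
  rcases hxy.lt_or_gt with hyx | hxy
  · have hderiv : HasDerivAt (fun x => y ^ 2 / (2 * ρ) - a * (x - y) - 1 / 2 * κ * (x - y) ^ 2)
        (-a - κ * (x - y)) x := by
      have hsub := (hasDerivAt_id x).sub_const y
      exact (((hsub.const_mul a).const_sub _).sub ((hsub.pow 2).const_mul (1 / 2 * κ))).congr_deriv
        (by norm_num; ring)
    rw [profitDeriv, if_pos hyx]
    refine hderiv.congr_of_eventuallyEq ?_
    filter_upwards [eventually_gt_nhds hyx] with t ht
    rw [profit, min_eq_right ht.le, max_eq_left (by linarith)]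
  · have hderiv : HasDerivAt (fun x => x ^ 2 / (2 * ρ)) (x / ρ) x :=
      ((hasDerivAt_pow 2 x).div_const (2 * ρ)).congr_deriv (by norm_num; ring)
    rw [profitDeriv, if_neg hxy.not_gt]
    refine hderiv.congr_of_eventuallyEq ?_
    filter_upwards [eventually_lt_nhds hxy] with t ht
    simp [profit, min_eq_left ht.le, max_eq_right (by linarith : t - y ≤ 0)]

theorem measurable_profitDeriv (x : ℝ) : Measurable (profitDeriv ρ a κ x) :=
  Measurable.ite measurableSet_Iio (by fun_prop) measurable_const

variable {P : Measure ℝ}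

theorem integrable_profit [IsFiniteMeasure P] (hP : ∀ᵐ y ∂P, 0 ≤ y) {x : ℝ} (hx : 0 ≤ x) :
    Integrable (profit ρ a κ x) P := by
  refine Integrable.mono' (integrable_const ((x / |ρ| + |a| + |κ| * x) * x))
    (continuous_profit x).aestronglyMeasurable ?_
  filter_upwards [hP] with y hy
  simpa [profit_zero_left hy, abs_of_nonneg hx] using
    abs_profit_sub_le (ρ := ρ) (a := a) (κ := κ) hy ⟨hx, le_rfl⟩ ⟨le_rfl, hx⟩

theorem hasDerivAt_integral_profit [IsFiniteMeasure P] [NullSingletonClass P]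
    (hP : ∀ᵐ y ∂P, 0 ≤ y) {x : ℝ} (hx : 0 < x) :
    HasDerivAt (fun x => ∫ y, profit ρ a κ x y ∂P) (∫ y, profitDeriv ρ a κ x y ∂P) x := by
  have hball : Metric.ball x x ⊆ Icc 0 (2 * x) := by
    intro t ht
    rw [Metric.mem_ball, Real.dist_eq, abs_lt] at ht
    constructor <;> linarith
  have hlip : ∀ᵐ y ∂P, LipschitzOnWith (Real.nnabs (2 * x / |ρ| + |a| + |κ| * (2 * x)))
      (profit ρ a κ · y) (Metric.ball x x) := by
    filter_upwards [hP] with y hy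
    refine LipschitzOnWith.of_dist_le_mul fun t ht t' ht' => ?_
    rw [Real.coe_nnabs, abs_of_nonneg (by positivity)]
    exact abs_profit_sub_le hy (hball ht) (hball ht')
  have hdiff : ∀ᵐ y ∂P, HasDerivAt (profit ρ a κ · y) (profitDeriv ρ a κ x y) x := by
    filter_upwards [P.ae_ne x] with y hy
    exact hasDerivAt_profit hy
  exact (hasDerivAt_integral_of_dominated_loc_of_lip (Metric.ball_mem_nhds x hx)
    (.of_forall fun t => (continuous_profit t).aestronglyMeasurable) (integrable_profit hP hx.le)
    (measurable_profitDeriv x).aestronglyMeasurable hlip (integrable_const _) hdiff).2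

theorem integral_profitDeriv [IsProbabilityMeasure P] (hP : ∀ᵐ y ∂P, 0 ≤ y) (x : ℝ) :
    ∫ y, profitDeriv ρ a κ x y ∂P =
      x / ρ * (1 - P.real (Iio x)) - (a + κ * x) * P.real (Iio x) + κ * ∫ y in Iio x, y ∂P := by
  have hid : IntegrableOn (fun y => y) (Iio x) P := by
    refine Integrable.mono' (integrable_const x) aestronglyMeasurable_id ?_
    filter_upwards [ae_restrict_of_ae hP, ae_restrict_mem measurableSet_Iio] with y hy hyx
    simpa [abs_of_nonneg hy] using hyx.le
  have hpiece : profitDeriv ρ a κ x =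
      (Iio x).piecewise (fun y => -a - κ * x + κ * y) (fun _ => x / ρ) := by
    ext y
    by_cases hy : y < x <;> simp [profitDeriv, Set.piecewise, hy]
    ring
  have hconst : IntegrableOn (fun _ => -a - κ * x) (Iio x) P :=
    integrableOn_const (measure_ne_top _ _)
  have hlin : IntegrableOn (fun y => κ * y) (Iio x) P := hid.const_mul κ
  rw [hpiece, integral_piecewise (f := fun y => -a - κ * x + κ * y) measurableSet_Iio
    (hconst.add hlin) (integrableOn_const (measure_ne_top _ _)),
    integral_add hconst hlin, setIntegral_const, setIntegral_const, integral_const_mul,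
    probReal_compl_eq_one_sub measurableSet_Iio, smul_eq_mul, smul_eq_mul]
  ring

end OrderBook

open OrderBook in
theorem stmt_10_general (sa sb ρp ρm : ℝ)
    (P : Measure ℝ) [IsProbabilityMeasure P] [NullSingletonClass P]
    (hP : P (Iio 0) = 0)
    (π : ℝ → ℝ → ℝ) (G p q : ℝ → ℝ)
    (hπ : ∀ x y, π x y = min x y ^ 2 / (2 * ρp) - (sa - sb) * max (x - y) 0
      - (1 / 2) * (1 / ρp + 1 / ρm) * max (x - y) 0 ^ 2)
    (hG : ∀ x, G x = ∫ y, π x y ∂P)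
    (hp : ∀ x, p x = (P {y | y < x}).toReal)
    (hq : ∀ x, q x = ∫ y in {y | y < x}, y ∂P) :
    (∀ x, 0 < x → HasDerivAt G
      ((x / ρp) * (1 - p x) - ((sa - sb) + (1 / ρp + 1 / ρm) * x) * p x
        + (1 / ρp + 1 / ρm) * q x) x) ∧
    (∀ xstar, 0 < xstar → (∀ x, 0 ≤ x → G x ≤ G xstar) → 0 < p xstar →
      2 / ρp + 1 / ρm - 1 / (ρp * p xstar) ≠ 0 →
      xstar = ((1 / ρp + 1 / ρm) * (q xstar / p xstar) - (sa - sb)) /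
        (2 / ρp + 1 / ρm - 1 / (ρp * p xstar))) := by
  have hP' : ∀ᵐ y ∂P, 0 ≤ y := measure_mono_null (fun y (hy : ¬0 ≤ y) => not_le.1 hy) hP
  have hG' : G = fun x => ∫ y, profit ρp (sa - sb) (1 / ρp + 1 / ρm) x y ∂P := by
    ext x; simp only [hG, hπ, profit]
  have hderiv : ∀ x, 0 < x → HasDerivAt G
      ((x / ρp) * (1 - p x) - ((sa - sb) + (1 / ρp + 1 / ρm) * x) * p x
        + (1 / ρp + 1 / ρm) * q x) x := by
    intro x hx
    rw [hG', hp, hq]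
    convert hasDerivAt_integral_profit hP' hx using 1
    rw [integral_profitDeriv hP']
    rfl
  refine ⟨hderiv, fun xs hxs hmax hp0 hden => ?_⟩
  have hlocmax : IsLocalMax G xs :=
    Filter.mem_of_superset (Ioi_mem_nhds hxs) fun x hx => hmax x (le_of_lt hx)
  have hcrit := hlocmax.hasDerivAt_eq_zero (hderiv xs hxs)
  rw [eq_div_iff hden]
  simp only [div_eq_mul_inv, one_mul, mul_inv] at hcrit ⊢
  generalize ρp⁻¹ = u at *
  generalize ρm⁻¹ = v at *
  have hpne : p xs ≠ 0 := hp0.ne'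
  field_simp
  linear_combination -hcrit

/-- Size uncertainty: the expected profit `G` is differentiable for `x > 0` with the
stated derivative, and any positive maximiser `x*` of `G` over `[0,∞)` satisfies the
nonlinear fixed-point equation in the lower partial moment and `P(y < x*)`. -/
theorem stmt_10 (sa sb ρp ρm : ℝ) (hs : sb ≤ sa) (hρp : 0 < ρp) (hρm : 0 < ρm)
    (P : Measure ℝ) [IsProbabilityMeasure P] [NullSingletonClass P]
    (hP : P (Iio 0) = 0)
    (π : ℝ → ℝ → ℝ) (G p q : ℝ → ℝ)
    (hπ : ∀ x y, π x y = min x y ^ 2 / (2 * ρp) - (sa - sb) * max (x - y) 0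
      - (1 / 2) * (1 / ρp + 1 / ρm) * max (x - y) 0 ^ 2)
    (hG : ∀ x, G x = ∫ y, π x y ∂P)
    (hp : ∀ x, p x = (P {y | y < x}).toReal)
    (hq : ∀ x, q x = ∫ y in {y | y < x}, y ∂P) :
    (∀ x, 0 < x → HasDerivAt G
      ((x / ρp) * (1 - p x) - ((sa - sb) + (1 / ρp + 1 / ρm) * x) * p x
        + (1 / ρp + 1 / ρm) * q x) x) ∧
    (∀ xstar, 0 < xstar → (∀ x, 0 ≤ x → G x ≤ G xstar) → 0 < p xstar →
      2 / ρp + 1 / ρm - 1 / (ρp * p xstar) ≠ 0 →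
      xstar = ((1 / ρp + 1 / ρm) * (q xstar / p xstar) - (sa - sb)) /
        (2 / ρp + 1 / ρm - 1 / (ρp * p xstar))) :=
  stmt_10_general sa sb ρp ρm P hP π G p q hπ hG hp hq
end

section
/- Let s* ≥ s_* be reals, ρ⁺, ρ⁻ > 0, θ > 0, and let P be the uniform probability measure on [0,θ]. With π(x,y) = min(x,y)²/(2ρ⁺) − (s*−s_*)·max(x−y,0) − (1/2)·(1/ρ⁺ + 1/ρ⁻)·max(x−y,0)² and G(x) = ∫ π(x,y) dP(y), the expected profit G is maximised over x ≥ 0 at x̂ = max(0, 2·(θ − (s*−s_*)·ρ⁺)/(3 + ρ⁺/ρ⁻)), i.e. G(x) ≤ G(x̂) for all x ≥ 0. -/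
/-!
For `0 ≤ x ≤ θ` the expected profit under the uniform prior is the cubic `θ⁻¹ (a x² - b x³)`
with `a = θ/(2ρ⁺) - (s* - s_*)/2` and `b = 1/(3ρ⁺) + (1/ρ⁺ + 1/ρ⁻)/6 > 0`, whose maximum over `x ≥ 0` sits at
`max 0 (2a/(3b)) = x̂ ≤ θ`.
Buying more than `θ` only adds stock that must be liquidated at a loss, so `G x ≤ G θ` for `x ≥ θ`.
-/

open MeasureTheory Set

noncomputable section

def fastTraderProfit (ρ Δ c x y : ℝ) : ℝ :=
  min x y ^ 2 / (2 * ρ) - Δ * max (x - y) 0 - c * max (x - y) 0 ^ 2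

namespace fastTraderProfit

variable {ρ Δ c : ℝ}

@[fun_prop]
theorem continuous (ρ Δ c x : ℝ) : Continuous (fastTraderProfit ρ Δ c x) := by
  unfold fastTraderProfit; fun_prop

theorem of_le {x y : ℝ} (h : y ≤ x) :
    fastTraderProfit ρ Δ c x y = y ^ 2 / (2 * ρ) - Δ * (x - y) - c * (x - y) ^ 2 := by
  rw [fastTraderProfit, min_eq_right h, max_eq_left (sub_nonneg.mpr h)]

theorem of_ge {x y : ℝ} (h : x ≤ y) : fastTraderProfit ρ Δ c x y = x ^ 2 / (2 * ρ) := by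
  rw [fastTraderProfit, min_eq_left h, max_eq_right (sub_nonpos.mpr h)]
  ring

theorem antitoneOn_Ici (hΔ : 0 ≤ Δ) (hc : 0 ≤ c) (y : ℝ) :
    AntitoneOn (fun x => fastTraderProfit ρ Δ c x y) (Ici y) := by
  intro x hx x' hx' hxx'
  simp only [of_le hx, of_le hx']
  have : (x - y) ^ 2 ≤ (x' - y) ^ 2 := pow_le_pow_left₀ (sub_nonneg.mpr hx) (by linarith) 2
  nlinarith

theorem intervalIntegral_eq_cubic {θ x : ℝ} (hx : 0 ≤ x) (hxθ : x ≤ θ) :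
    ∫ y in (0 : ℝ)..θ, fastTraderProfit ρ Δ c x y
      = (θ / (2 * ρ) - Δ / 2) * x ^ 2 - (1 / (3 * ρ) + c / 3) * x ^ 3 := by
  have hint : ∀ a b, IntervalIntegrable (fastTraderProfit ρ Δ c x) volume a b :=
    fun a b => (continuous ρ Δ c x).intervalIntegrable a b
  rw [← intervalIntegral.integral_add_adjacent_intervals (hint 0 x) (hint x θ)]
  have hleft : ∫ y in (0 : ℝ)..x, fastTraderProfit ρ Δ c x y
      = ∫ y in (0 : ℝ)..x, (y ^ 2 / (2 * ρ) - Δ * (x - y) - c * (x - y) ^ 2) :=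
    intervalIntegral.integral_congr fun y hy => of_le (uIcc_of_le hx ▸ hy).2
  have hright : ∫ y in x..θ, fastTraderProfit ρ Δ c x y = ∫ _ in x..θ, x ^ 2 / (2 * ρ) :=
    intervalIntegral.integral_congr fun y hy => of_ge (uIcc_of_le hxθ ▸ hy).1
  have hderiv : ∀ y,
      HasDerivAt (fun y => y ^ 3 / (6 * ρ) + Δ * (x - y) ^ 2 / 2 + c * (x - y) ^ 3 / 3)
      (y ^ 2 / (2 * ρ) - Δ * (x - y) - c * (x - y) ^ 2) y := by
    intro y
    have hxy : HasDerivAt (fun y : ℝ => x - y) (-1) y := (hasDerivAt_id y).const_sub x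
    exact ((((hasDerivAt_pow 3 y).div_const (6 * ρ)).add
      (((hxy.pow 2).const_mul Δ).div_const 2)).add
      (((hxy.pow 3).const_mul c).div_const 3)).congr_deriv (by push_cast; ring)
  rw [hleft, hright, intervalIntegral.integral_eq_sub_of_hasDerivAt (fun y _ => hderiv y)
    (by apply Continuous.intervalIntegrable; fun_prop), intervalIntegral.integral_const,
    smul_eq_mul]
  ring

theorem intervalIntegral_le_min (hΔ : 0 ≤ Δ) (hc : 0 ≤ c) {θ : ℝ} (hθ : 0 ≤ θ) (x : ℝ) :
    ∫ y in (0 : ℝ)..θ, fastTraderProfit ρ Δ c x y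
      ≤ ∫ y in (0 : ℝ)..θ, fastTraderProfit ρ Δ c (min x θ) y := by
  rcases le_total x θ with hxθ | hθx
  · rw [min_eq_left hxθ]
  · rw [min_eq_right hθx]
    exact intervalIntegral.integral_mono_on hθ ((continuous ρ Δ c x).intervalIntegrable _ _)
      ((continuous ρ Δ c θ).intervalIntegrable _ _)
      fun y hy => antitoneOn_Ici hΔ hc y hy.2 (hy.2.trans hθx) hθx

end fastTraderProfit

theorem cubic_le_at_max_zero {a b z : ℝ} (hb : 0 < b) (hz : 0 ≤ z) :
    a * z ^ 2 - b * z ^ 3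
      ≤ a * max 0 (2 * a / (3 * b)) ^ 2 - b * max 0 (2 * a / (3 * b)) ^ 3 := by
  rcases le_or_gt a 0 with ha | ha
  · rw [max_eq_left (div_nonpos_of_nonpos_of_nonneg (by linarith) (by positivity))]
    nlinarith [mul_nonneg hb.le (pow_nonneg hz 3), mul_nonpos_of_nonpos_of_nonneg ha (sq_nonneg z)]
  · set t := 2 * a / (3 * b) with ht
    have ha_eq : a = 3 * b * t / 2 := by rw [ht]; field_simp
    rw [max_eq_right (by positivity)]
    -- the gap factors as `b (z - t)² (2z + t) / 2`
    have : 0 ≤ b * (z - t) ^ 2 * (2 * z + t) := by positivity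
    rw [ha_eq]
    nlinarith

theorem integral_uniformIcc {θ : ℝ} (hθ : 0 ≤ θ) (f : ℝ → ℝ) :
    ∫ y, f y ∂((ENNReal.ofReal θ)⁻¹ • volume.restrict (Icc 0 θ))
      = θ⁻¹ * ∫ y in (0 : ℝ)..θ, f y := by
  rw [integral_smul_measure, ENNReal.toReal_inv, ENNReal.toReal_ofReal hθ, smul_eq_mul,
    integral_Icc_eq_integral_Ioc, intervalIntegral.integral_of_le hθ]

end

/-- Uniform prior on `[0,θ]`: the fast trader's expected profit is maximised over
`x ≥ 0` at `x̂ = max 0 (2·(θ − (s*−s_*)·ρ⁺)/(3 + ρ⁺/ρ⁻))`. -/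
theorem stmt_11 (sa sb ρp ρm θ : ℝ) (hs : sb ≤ sa) (hρp : 0 < ρp) (hρm : 0 < ρm)
    (hθ : 0 < θ)
    (P : Measure ℝ)
    (hP : P = (ENNReal.ofReal θ)⁻¹ • volume.restrict (Icc 0 θ))
    (π : ℝ → ℝ → ℝ) (G : ℝ → ℝ)
    (hπ : ∀ x y, π x y = min x y ^ 2 / (2 * ρp) - (sa - sb) * max (x - y) 0
      - (1 / 2) * (1 / ρp + 1 / ρm) * max (x - y) 0 ^ 2)
    (hG : ∀ x, G x = ∫ y, π x y ∂P) :
    ∀ x, 0 ≤ x → G x ≤ G (max 0 (2 * (θ - (sa - sb) * ρp) / (3 + ρp / ρm))) := by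
  set Δ := sa - sb
  set c : ℝ := 1 / 2 * (1 / ρp + 1 / ρm)
  set a := θ / (2 * ρp) - Δ / 2
  set b := 1 / (3 * ρp) + c / 3
  have hΔ : 0 ≤ Δ := sub_nonneg.mpr hs
  have hc : 0 ≤ c := by positivity
  have hb : 0 < b := by positivity
  have hhat : 2 * (θ - Δ * ρp) / (3 + ρp / ρm) = 2 * a / (3 * b) := by
    simp only [a, b, c]; field_simp; ring
  have hgap : 3 * b * θ - 2 * a = c * θ + Δ := by
    simp only [a, b, c]; field_simp; ring
  have hhatθ : max 0 (2 * a / (3 * b)) ≤ θ := by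
    refine max_le hθ.le ((div_le_iff₀ (by positivity)).mpr ?_)
    nlinarith [mul_nonneg hc hθ.le]
  have hGint : ∀ x, G x = θ⁻¹ * ∫ y in (0 : ℝ)..θ, fastTraderProfit ρp Δ c x y := fun x => by
    rw [hG, hP, integral_uniformIcc hθ.le]; simp only [hπ, fastTraderProfit]
  intro x hx
  rw [hGint, hGint, hhat, fastTraderProfit.intervalIntegral_eq_cubic (le_max_left _ _) hhatθ]
  gcongr
  calc ∫ y in (0 : ℝ)..θ, fastTraderProfit ρp Δ c x y
      ≤ ∫ y in (0 : ℝ)..θ, fastTraderProfit ρp Δ c (min x θ) y :=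
        fastTraderProfit.intervalIntegral_le_min hΔ hc hθ.le x
    _ = a * min x θ ^ 2 - b * min x θ ^ 3 :=
        fastTraderProfit.intervalIntegral_eq_cubic (le_min hx hθ.le) (min_le_right _ _)
    _ ≤ _ := cubic_le_at_max_zero hb (le_min hx hθ.le)
end

section
/- Let b ≥ 0, ρ > 0, y* > 0 and p ∈ ℝ, and set B(y) = p − b·(y − y*) and D⁺(y) = p + (y − y*)/ρ. In the presence of the fast trader the slow trader's surplus from buying y stocks is γ_A(y) = ∫₀ʸ B(u) du − y·D⁺(y). Then γ_A is uniquely maximised over [0,∞) at y_A = ((1 + bρ)/(2 + bρ))·y* > 0; that is, γ_A(y) ≤ γ_A(y_A) for all y ≥ 0 with equality only at y = y_A. -/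
/-! Integrating the linear marginal demand shows that `γ_A` is the concave quadratic
`-(b/2 + 1/ρ) y² + (b + 1/ρ) y* y`. Completing the square puts its vertex at
`(b + 1/ρ) y* / (b + 2/ρ) = ((1 + bρ)/(2 + bρ)) y*`, the unique maximiser on all of `ℝ`. -/

theorem intervalIntegral_const_sub_mul_id (α β y : ℝ) :
    ∫ u in (0 : ℝ)..y, (α - β * u) = α * y - β * (y ^ 2 / 2) := by
  rw [intervalIntegral.integral_sub intervalIntegrable_const
      ((continuous_const_mul β).intervalIntegrable _ _),
    intervalIntegral.integral_const, intervalIntegral.integral_const_mul, integral_id]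
  simp only [sub_zero, smul_eq_mul, ne_eq, OfNat.ofNat_ne_zero, not_false_eq_true,
    zero_pow]
  ring

theorem neg_mul_sq_add_mul_eq (a c y : ℝ) (ha : a ≠ 0) :
    -a * y ^ 2 + c * y = c ^ 2 / (4 * a) - a * (y - c / (2 * a)) ^ 2 := by
  field_simp
  ring

theorem le_and_eq_imp_of_eq_sub_mul_sq {f : ℝ → ℝ} {a M y₀ : ℝ} (ha : 0 < a)
    (hf : ∀ y, f y = M - a * (y - y₀) ^ 2) :
    (∀ y, f y ≤ f y₀) ∧ ∀ y, f y = f y₀ → y = y₀ := by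
  refine ⟨fun y => ?_, fun y hy => ?_⟩
  · rw [hf, hf]
    nlinarith [sq_nonneg (y - y₀)]
  · rw [hf, hf, sub_self, zero_pow two_ne_zero, mul_zero, sub_zero, sub_eq_self,
      mul_eq_zero, sq_eq_zero_iff, sub_eq_zero] at hy
    exact hy.resolve_left ha.ne'

/-- With linear marginal demand, in the presence of the fast trader the slow trader's
surplus `γ_A` is uniquely maximised over `[0,∞)` at
`y_A = ((1+bρ)/(2+bρ))·y* > 0`. -/
theorem stmt_13 (b ρ ystar p : ℝ) (hb : 0 ≤ b) (hρ : 0 < ρ) (hystar : 0 < ystar)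
    (B Dp γA : ℝ → ℝ) (yA : ℝ)
    (hB : ∀ y, B y = p - b * (y - ystar))
    (hD : ∀ y, Dp y = p + (y - ystar) / ρ)
    (hγ : ∀ y, γA y = (∫ u in (0:ℝ)..y, B u) - y * Dp y)
    (hyA : yA = ((1 + b * ρ) / (2 + b * ρ)) * ystar) :
    0 < yA ∧ (∀ y, 0 ≤ y → γA y ≤ γA yA) ∧
      (∀ y, 0 ≤ y → γA y = γA yA → y = yA) := by
  set a := b / 2 + 1 / ρ
  set c := (b + 1 / ρ) * ystar
  have ha : 0 < a := by positivity
  have hγA_quadratic : ∀ y, γA y = -a * y ^ 2 + c * y := by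
    intro y
    have hB' : B = fun u => (p + b * ystar) - b * u := funext fun u => by rw [hB]; ring
    rw [hγ, hB', intervalIntegral_const_sub_mul_id, hD]
    simp only [a, c]
    field_simp
    ring
  have hyA_vertex : yA = c / (2 * a) := by
    rw [hyA]
    simp only [a, c]
    field_simp
    ring
  obtain ⟨hmax, huniq⟩ :=
    le_and_eq_imp_of_eq_sub_mul_sq ha (f := γA) (M := c ^ 2 / (4 * a)) (y₀ := yA) fun y => by
      rw [hγA_quadratic, neg_mul_sq_add_mul_eq a c y ha.ne', ← hyA_vertex]
  exact ⟨by rw [hyA]; positivity, fun y _ => hmax y, fun y _ => huniq y⟩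
end

section
/- Let b ≥ 0, ρ > 0, y* > 0, p ∈ ℝ, B(y) = p − b·(y − y*), D⁺(y) = p + (y − y*)/ρ, and y_A = ((1 + bρ)/(2 + bρ))·y*. Define the surplus without the fast trader γ*(y) = ∫₀ʸ (B(u) − D⁺(u)) du, the surplus with the fast trader γ_A(y) = ∫₀ʸ B(u) du − y·D⁺(y), and the fast trader's profit π_A = y_A·D⁺(y_A) − ∫₀^{y_A} D⁺(u) du. Then the deadweight loss introduced by the fast trader satisfies γ*(y*) − γ_A(y_A) − π_A = ∫_{y_A}^{y*} (B(u) − D⁺(u)) du = (b + 1/ρ)·(y* − y_A)²/2 = (b + 1/ρ)·(y*)²/(2·(2 + bρ)²). -/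
/-! The fast trader's profit and the slow trader's surplus γ_A(y_A) add up to the surplus
`∫₀^{y_A} (B − D⁺)` that the slow trader would have had by trading only `y_A` without the fast
trader, so the deadweight loss is the forgone surplus on `[y_A, y*]`.  Since `B(y*) = D⁺(y*)`,
the integrand `B − D⁺ = (b + 1/ρ)(y* − u)` is linear and vanishes at `y*`, giving a triangle of
area `(b + 1/ρ)(y* − y_A)²/2`, and `y* − y_A = y*/(2 + bρ)`. -/

open intervalIntegral

theorem integral_sub_sub_front_running {B D : ℝ → ℝ} (hB : Continuous B) (hD : Continuous D)
    (a c : ℝ) :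
    (∫ u in (0:ℝ)..c, (B u - D u)) - ((∫ u in (0:ℝ)..a, B u) - a * D a)
      - (a * D a - ∫ u in (0:ℝ)..a, D u) = ∫ u in a..c, (B u - D u) := by
  have hBD : Continuous fun u => B u - D u := hB.sub hD
  rw [← integral_interval_sub_left (hBD.intervalIntegrable 0 c) (hBD.intervalIntegrable 0 a),
    integral_sub (hB.intervalIntegrable 0 a) (hD.intervalIntegrable 0 a)]
  ring

theorem integral_const_mul_sub_self (k a c : ℝ) :
    ∫ u in a..c, k * (c - u) = k * (c - a) ^ 2 / 2 := by
  rw [integral_const_mul, integral_sub intervalIntegrable_const intervalIntegrable_id,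
    integral_const, integral_id, smul_eq_mul]
  ring

theorem stmt_14_general (b ρ ystar p : ℝ) (hb : 0 ≤ b) (hρ : 0 < ρ)
    (B Dp γstar γA : ℝ → ℝ) (yA πA : ℝ)
    (hB : ∀ y, B y = p - b * (y - ystar))
    (hD : ∀ y, Dp y = p + (y - ystar) / ρ)
    (hyA : yA = ((1 + b * ρ) / (2 + b * ρ)) * ystar)
    (hγstar : ∀ y, γstar y = ∫ u in (0:ℝ)..y, (B u - Dp u))
    (hγA : ∀ y, γA y = (∫ u in (0:ℝ)..y, B u) - y * Dp y)
    (hπA : πA = yA * Dp yA - ∫ u in (0:ℝ)..yA, Dp u) :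
    γstar ystar - γA yA - πA = (∫ u in yA..ystar, (B u - Dp u)) ∧
      γstar ystar - γA yA - πA = (b + 1 / ρ) * (ystar - yA) ^ 2 / 2 ∧
      γstar ystar - γA yA - πA = (b + 1 / ρ) * ystar ^ 2 / (2 * (2 + b * ρ) ^ 2) := by
  have hBc : Continuous B := by rw [funext hB]; fun_prop
  have hDc : Continuous Dp := by rw [funext hD]; fun_prop
  have hloss : γstar ystar - γA yA - πA = ∫ u in yA..ystar, (B u - Dp u) := by
    rw [hγstar, hγA, hπA]
    exact integral_sub_sub_front_running hBc hDc yA ystar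
  have hgap : ∀ u, B u - Dp u = (b + 1 / ρ) * (ystar - u) := by
    intro u; rw [hB, hD]; ring
  have htriangle : γstar ystar - γA yA - πA = (b + 1 / ρ) * (ystar - yA) ^ 2 / 2 := by
    simp only [hloss, hgap, integral_const_mul_sub_self]
  have hne : 2 + b * ρ ≠ 0 := by positivity
  have hshortfall : ystar - yA = ystar / (2 + b * ρ) := by
    rw [hyA]; field_simp; ring
  refine ⟨hloss, htriangle, ?_⟩
  rw [htriangle, hshortfall]
  field_simp

/-- Deadweight loss introduced by the fast trader:
`γ*(y*) − γ_A(y_A) − π_A = ∫_{y_A}^{y*} (B − D⁺) = (b + 1/ρ)·(y* − y_A)²/2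
  = (b + 1/ρ)·(y*)²/(2·(2+bρ)²)`. -/
theorem stmt_14 (b ρ ystar p : ℝ) (hb : 0 ≤ b) (hρ : 0 < ρ) (hystar : 0 < ystar)
    (B Dp γstar γA : ℝ → ℝ) (yA πA : ℝ)
    (hB : ∀ y, B y = p - b * (y - ystar))
    (hD : ∀ y, Dp y = p + (y - ystar) / ρ)
    (hyA : yA = ((1 + b * ρ) / (2 + b * ρ)) * ystar)
    (hγstar : ∀ y, γstar y = ∫ u in (0:ℝ)..y, (B u - Dp u))
    (hγA : ∀ y, γA y = (∫ u in (0:ℝ)..y, B u) - y * Dp y)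
    (hπA : πA = yA * Dp yA - ∫ u in (0:ℝ)..yA, Dp u) :
    γstar ystar - γA yA - πA = (∫ u in yA..ystar, (B u - Dp u)) ∧
      γstar ystar - γA yA - πA = (b + 1 / ρ) * (ystar - yA) ^ 2 / 2 ∧
      γstar ystar - γA yA - πA = (b + 1 / ρ) * ystar ^ 2 / (2 * (2 + b * ρ) ^ 2) :=
  stmt_14_general b ρ ystar p hb hρ B Dp γstar γA yA πA hB hD hyA hγstar hγA hπA
end

section
/- Let b ≥ 0, ρ > 0, s* > 0, y* > 0 and 0 ≤ R < 1. Set A := −R·s* + (b + 1/ρ)·y*, y_min := 2·(R/(1−R))·s*·ρ, y₂ := A/(b + 2(1+R)/ρ), and define the slow trader's surplus under the Tobin tax by γ(y) := A·y − (b + (1+R)/ρ)·y²/2 for 0 ≤ y ≤ y_min and γ(y) := A·y − (b + 2(1+R)/ρ)·y²/2 for y > y_min. If y₂ ≥ 2·y_min, then γ(y) ≤ γ(y₂) for all y ≥ 0; that is, the slow trader's surplus is maximised by trading y₂, and the fast trader (who trades only when y > y_min) also trades. -/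
/-!
Write `c₂ = b + 2(1+R)/ρ`, so that `A = c₂·y₂`. Above `y_min` the
surplus is the concave parabola `A·y − c₂·y²/2`, whose vertex is `y₂`. Below `y_min` the
surplus is at most `A·y ≤ A·y_min ≤ A·y₂/2`, and `A·y₂/2` is exactly the value at the vertex.
Finally `y₂ > 0` (from `y_min > 0` if `R > 0`, from `A > 0` if `R = 0`), so `y_min ≤ y₂/2 < y₂`.
-/

lemma mul_sub_sq_le_vertex {c y₀ : ℝ} (hc : 0 ≤ c) (y : ℝ) :
    c * y₀ * y - c * y ^ 2 / 2 ≤ c * y₀ * y₀ - c * y₀ ^ 2 / 2 := by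
  nlinarith [mul_nonneg hc (sq_nonneg (y - y₀))]

lemma mul_sub_sq_le_vertex_of_two_mul_le {c₁ c₂ m y₀ y : ℝ} (hc₁ : 0 ≤ c₁) (hc₂ : 0 ≤ c₂)
    (hy₀ : 0 ≤ y₀) (hm : 2 * m ≤ y₀) (hym : y ≤ m) :
    c₂ * y₀ * y - c₁ * y ^ 2 / 2 ≤ c₂ * y₀ * y₀ - c₂ * y₀ ^ 2 / 2 := by
  have hA : 0 ≤ c₂ * y₀ := mul_nonneg hc₂ hy₀
  calc c₂ * y₀ * y - c₁ * y ^ 2 / 2 ≤ c₂ * y₀ * m := by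
        nlinarith [mul_le_mul_of_nonneg_left hym hA, mul_nonneg hc₁ (sq_nonneg y)]
    _ ≤ c₂ * y₀ * (y₀ / 2) := mul_le_mul_of_nonneg_left (by linarith) hA
    _ = c₂ * y₀ * y₀ - c₂ * y₀ ^ 2 / 2 := by ring

lemma piecewise_mul_sub_sq_le_vertex {c₁ c₂ m y₀ y : ℝ} (hc₁ : 0 ≤ c₁) (hc₂ : 0 ≤ c₂)
    (hy₀ : 0 ≤ y₀) (hm : 2 * m ≤ y₀) :
    (if y ≤ m then c₂ * y₀ * y - c₁ * y ^ 2 / 2 else c₂ * y₀ * y - c₂ * y ^ 2 / 2) ≤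
      c₂ * y₀ * y₀ - c₂ * y₀ ^ 2 / 2 := by
  split_ifs with hym
  · exact mul_sub_sq_le_vertex_of_two_mul_le hc₁ hc₂ hy₀ hm hym
  · exact mul_sub_sq_le_vertex hc₂ y

/-- Equilibrium with fast trader and Tobin tax: if `y₂ ≥ 2·y_min`, the slow trader's
surplus is maximised by trading `y₂`, and since `y₂ > y_min` the fast trader also
trades. -/
theorem stmt_15 (b ρ sa ystar R A ymin y2 : ℝ)
    (hb : 0 ≤ b) (hρ : 0 < ρ) (hsa : 0 < sa) (hystar : 0 < ystar)
    (hR0 : 0 ≤ R) (hR1 : R < 1)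
    (hA : A = -R * sa + (b + 1 / ρ) * ystar)
    (hymin : ymin = 2 * (R / (1 - R)) * sa * ρ)
    (hy2 : y2 = A / (b + 2 * (1 + R) / ρ))
    (γ : ℝ → ℝ)
    (hγ : ∀ y, γ y = if y ≤ ymin then A * y - (b + (1 + R) / ρ) * y ^ 2 / 2
      else A * y - (b + 2 * (1 + R) / ρ) * y ^ 2 / 2)
    (h2 : 2 * ymin ≤ y2) :
    (∀ y, 0 ≤ y → γ y ≤ γ y2) ∧ ymin < y2 := by
  have hc₂ : 0 < b + 2 * (1 + R) / ρ := by positivity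
  have hA_eq : A = (b + 2 * (1 + R) / ρ) * y2 := by rw [hy2, mul_div_cancel₀ _ hc₂.ne']
  have hy2_pos : 0 < y2 := by
    rcases hR0.eq_or_lt with rfl | hR
    · rw [hy2, hA, neg_zero, zero_mul, zero_add]
      positivity
    · have : 0 < R / (1 - R) := div_pos hR (sub_pos.2 hR1)
      have : 0 < ymin := by rw [hymin]; positivity
      linarith
  have hlt : ymin < y2 := by linarith
  refine ⟨fun y _ => ?_, hlt⟩
  rw [hγ, hγ y2, if_neg hlt.not_ge, hA_eq]
  exact piecewise_mul_sub_sq_le_vertex (by positivity) hc₂.le hy2_pos.le h2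
end

section
/- Let b ≥ 0, ρ > 0, s* > 0, y* > 0 and 0 ≤ R < 1. Define y_A := ((1 + bρ)/(2 + bρ))·y* (the slow trader's trade facing the fast trader without tax), ỹ := y* − R·s*·ρ/(1 + R + bρ) and y_min := 2·(R/(1−R))·s*·ρ, so that the slow trader's trade under the Tobin tax is y_{A,T} = min(ỹ, y_min). Then y_{A,T} > y_A if and only if (2 + bρ)·R·s*·ρ/(1 + R + bρ) < y* < 2·((2 + bρ)/(1 + bρ))·(R/(1−R))·s*·ρ. -/
/-!
Write `y_A = a/B · y*` with `a = 1 + bρ` and `B = a + 1 = 2 + bρ`, both positive. Then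
`y_A < y* − q` says exactly `y*/B > q`, i.e. `B q < y*`, and `y_A < y_min` says `y* < (B/a)·y_min`;
a minimum exceeds `y_A` iff both of its arguments do.
-/

lemma div_succ_mul_lt_sub_iff {a B y q : ℝ} (hB : 0 < B) (haB : B = a + 1) :
    a / B * y < y - q ↔ B * q < y := by
  have key : y - q - a / B * y = (y - B * q) / B := by
    field_simp
    rw [haB]
    ring
  rw [← sub_pos, key, div_pos_iff_of_pos_right hB, sub_pos]

lemma div_mul_lt_iff_lt_div_mul {a B y m : ℝ} (ha : 0 < a) (hB : 0 < B) :
    a / B * y < m ↔ y < B / a * m := by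
  rw [div_mul_eq_mul_div, div_lt_iff₀ hB, div_mul_eq_mul_div, lt_div_iff₀ ha, mul_comm a y, mul_comm m]

theorem stmt_16_general (b ρ sa ystar R : ℝ)
    (hb : 0 ≤ b) (hρ : 0 < ρ)
    (yA ytil ymin yAT : ℝ)
    (hyA : yA = ((1 + b * ρ) / (2 + b * ρ)) * ystar)
    (hytil : ytil = ystar - R * sa * ρ / (1 + R + b * ρ))
    (hymin : ymin = 2 * (R / (1 - R)) * sa * ρ)
    (hyAT : yAT = min ytil ymin) :
    yA < yAT ↔
      ((2 + b * ρ) * R * sa * ρ / (1 + R + b * ρ) < ystar ∧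
        ystar < 2 * ((2 + b * ρ) / (1 + b * ρ)) * (R / (1 - R)) * sa * ρ) := by
  have hbρ : 0 ≤ b * ρ := mul_nonneg hb hρ.le
  subst hyA hytil hymin hyAT
  rw [lt_min_iff,
    show (2 + b * ρ) * R * sa * ρ / (1 + R + b * ρ) = (2 + b * ρ) * (R * sa * ρ / (1 + R + b * ρ))
      by ring,
    show 2 * ((2 + b * ρ) / (1 + b * ρ)) * (R / (1 - R)) * sa * ρ
        = (2 + b * ρ) / (1 + b * ρ) * (2 * (R / (1 - R)) * sa * ρ) by ring]
  exact and_congr (div_succ_mul_lt_sub_iff (by linarith) (by ring))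
    (div_mul_lt_iff_lt_div_mul (by linarith) (by linarith))

/-- A Tobin tax reduces the deadweight loss (i.e. the slow trader trades more than he
would facing the untaxed fast trader, `y_{A,T} > y_A`) if and only if
`(2+bρ)·R·s*·ρ/(1+R+bρ) < y* < 2·((2+bρ)/(1+bρ))·(R/(1−R))·s*·ρ`. -/
theorem stmt_16 (b ρ sa ystar R : ℝ)
    (hb : 0 ≤ b) (hρ : 0 < ρ) (hsa : 0 < sa) (hystar : 0 < ystar)
    (hR0 : 0 ≤ R) (hR1 : R < 1)
    (yA ytil ymin yAT : ℝ)
    (hyA : yA = ((1 + b * ρ) / (2 + b * ρ)) * ystar)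
    (hytil : ytil = ystar - R * sa * ρ / (1 + R + b * ρ))
    (hymin : ymin = 2 * (R / (1 - R)) * sa * ρ)
    (hyAT : yAT = min ytil ymin) :
    yA < yAT ↔
      ((2 + b * ρ) * R * sa * ρ / (1 + R + b * ρ) < ystar ∧
        ystar < 2 * ((2 + b * ρ) / (1 + b * ρ)) * (R / (1 - R)) * sa * ρ) :=
  stmt_16_general b ρ sa ystar R hb hρ yA ytil ymin yAT hyA hytil hymin hyAT
end
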